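/- For every Boolean network f of dimension n, the following are equivalent: (1) f is Lille, i.e. f is commutative and idempotent (f ∘ f = f); (2) for all x ∈ 𝔹^n and all y ∈ [x, f(x)], [y, f(y)] = [y, f(x)]; (3) f^{(S,T)} = f^{(S ∪ T)} for all S, T ⊆ [n]. -/

import Mathlib

/-!  Common definitions: Boolean networks on `Fin n → Bool`. -/

/-- The update `f^{(S)}` of the coordinates in `S` according to `f`. -/
def upd {n : ℕ} (f : (Fin n → Bool) → Fin n → Bool) (S : Finset (Fin n)) :
    (Fin n → Bool) → Fin n → Bool :=
  fun x i => if i ∈ S then f x i else x i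

/-- `f^{(S,T)} = f^{(T)} ∘ f^{(S)}`. -/
def upd2 {n : ℕ} (f : (Fin n → Bool) → Fin n → Bool) (S T : Finset (Fin n)) :
    (Fin n → Bool) → Fin n → Bool :=
  upd f T ∘ upd f S

/-- `Δ(x,y)`, the set of coordinates where `x` and `y` differ. -/
def delta {n : ℕ} (x y : Fin n → Bool) : Set (Fin n) := {i | x i ≠ y i}

/-- Hamming distance. -/
noncomputable def hdist {n : ℕ} (x y : Fin n → Bool) : ℕ := (delta x y).ncard

/-- The interval (subcube) `[x,y]`. -/
def interval {n : ℕ} (x y : Fin n → Bool) : Set (Fin n → Bool) :=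
  {z | delta x z ⊆ delta x y}

/-- A subcube of `𝔹^n`: fix the coordinates in `S` to `0` and those in `T` to `1`. -/
def IsSubcube {n : ℕ} (X : Set (Fin n → Bool)) : Prop :=
  ∃ S T : Set (Fin n), Disjoint S T ∧
    X = {x | (∀ i ∈ S, x i = false) ∧ (∀ i ∈ T, x i = true)}

/-- The partial order `f ⊑ g` on Boolean networks. -/
def BNle {n : ℕ} (f g : (Fin n → Bool) → Fin n → Bool) : Prop :=
  ∀ x, delta x (f x) ⊆ delta x (g x)

/-- A trapspace of `f`: an invariant subcube. -/
def IsTrapspace {n : ℕ} (f : (Fin n → Bool) → Fin n → Bool)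
    (X : Set (Fin n → Bool)) : Prop :=
  IsSubcube X ∧ ∀ x ∈ X, f x ∈ X

/-- The collection of all trapspaces of `f`. -/
def trapspaces {n : ℕ} (f : (Fin n → Bool) → Fin n → Bool) :
    Set (Set (Fin n → Bool)) :=
  {X | IsTrapspace f X}

/-- The principal trapspace `T_f(x)`: the smallest trapspace of `f` containing `x`. -/
def Tprin {n : ℕ} (f : (Fin n → Bool) → Fin n → Bool) (x : Fin n → Bool) :
    Set (Fin n → Bool) :=
  ⋂₀ {X | IsTrapspace f X ∧ x ∈ X}

/-- The collection of principal trapspaces of `f`. -/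
def PT {n : ℕ} (f : (Fin n → Bool) → Fin n → Bool) : Set (Set (Fin n → Bool)) :=
  {X | ∃ x, X = Tprin f x}

-- The opposite of `x` in a subcube `X` containing `x`: the coordinate `i` is flipped
-- iff some element of `X` differs from `x` there; so `[x, opp X x] = X` when `X` is a
-- subcube containing `x`.
open scoped Classical in
noncomputable def opp {n : ℕ} (X : Set (Fin n → Bool)) (x : Fin n → Bool) :
    Fin n → Bool :=
  fun i => if ∃ y ∈ X, y i ≠ x i then !(x i) else x i

/-- The trapping closure `f^T`, characterised by `[x, f^T(x)] = T_f(x)`. -/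
noncomputable def trapClosure {n : ℕ} (f : (Fin n → Bool) → Fin n → Bool) :
    (Fin n → Bool) → Fin n → Bool :=
  fun x => opp (Tprin f x) x

/-- The general asynchronous graph of `f`, as a relation on `𝔹^n`. -/
def GA {n : ℕ} (f : (Fin n → Bool) → Fin n → Bool) :
    (Fin n → Bool) → (Fin n → Bool) → Prop :=
  fun x y => ∃ S : Finset (Fin n), y = upd f S x

/-- The asynchronous graph of `f`, as a relation on `𝔹^n`. -/
def Agraph {n : ℕ} (f : (Fin n → Bool) → Fin n → Bool) :
    (Fin n → Bool) → (Fin n → Bool) → Prop :=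
  fun x y => ∃ i : Fin n, y = upd f {i} x

/-- The trapping graph of `f`: an edge `(x,y)` iff `y ∈ T_f(x)`. -/
def TG {n : ℕ} (f : (Fin n → Bool) → Fin n → Bool) :
    (Fin n → Bool) → (Fin n → Bool) → Prop :=
  fun x y => y ∈ Tprin f x

/-- A network is trapping if its general asynchronous graph is transitive. -/
def IsTrapping {n : ℕ} (f : (Fin n → Bool) → Fin n → Bool) : Prop :=
  Transitive (GA f)

/-- A commutative Boolean network: `f^{(i,j)} = f^{(j,i)}` for all `i,j`. -/
def IsCommutative' {n : ℕ} (f : (Fin n → Bool) → Fin n → Bool) : Prop :=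
  ∀ i j : Fin n, upd2 f {i} {j} = upd2 f {j} {i}

/-- `𝒜(x)`: the intersection of all members of `𝒜` containing `x`
(`= 𝔹^n` if no member contains `x`, since `⋂₀ ∅ = univ`). -/
def collAt {n : ℕ} (𝒜 : Set (Set (Fin n → Bool))) (x : Fin n → Bool) :
    Set (Fin n → Bool) :=
  ⋂₀ {A ∈ 𝒜 | x ∈ A}

/-- The network `F(𝒜)`, characterised by `[x, F(𝒜)(x)] = 𝒜(x)`. -/
noncomputable def Fnet {n : ℕ} (𝒜 : Set (Set (Fin n → Bool))) :
    (Fin n → Bool) → Fin n → Bool :=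
  fun x => opp (collAt 𝒜 x) x

/-- A collection of subcubes is pre-principal if `𝒬 = {𝒬(x) : x ∈ 𝔹^n}`. -/
def PrePrincipal {n : ℕ} (𝒬 : Set (Set (Fin n → Bool))) : Prop :=
  𝒬 = {X | ∃ x, X = collAt 𝒬 x}

/-- `λ(𝒜)`: unions of subcollections of `𝒜` that are subcubes. -/
def lamColl {n : ℕ} (𝒜 : Set (Set (Fin n → Bool))) : Set (Set (Fin n → Bool)) :=
  {X | ∃ ℛ ⊆ 𝒜, X = ⋃₀ ℛ ∧ IsSubcube X}

/-- `μ(𝒜) = {𝒜(x) : x ∈ 𝔹^n}`. -/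
def muColl {n : ℕ} (𝒜 : Set (Set (Fin n → Bool))) : Set (Set (Fin n → Bool)) :=
  {X | ∃ x, X = collAt 𝒜 x}

/-- A pre-ideal collection of subcubes. -/
def PreIdeal {n : ℕ} (𝒥 : Set (Set (Fin n → Bool))) : Prop :=
  Set.univ ∈ 𝒥 ∧
  (∀ A ∈ 𝒥, ∀ B ∈ 𝒥, (A ∩ B).Nonempty → A ∩ B ∈ 𝒥) ∧
  (∀ ℛ ⊆ 𝒥, IsSubcube (⋃₀ ℛ) → ⋃₀ ℛ ∈ 𝒥)

/-- The collection of minimal trapspaces of `f`. -/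
def MT {n : ℕ} (f : (Fin n → Bool) → Fin n → Bool) : Set (Set (Fin n → Bool)) :=
  {X | IsTrapspace f X ∧ ∀ Y, IsTrapspace f Y → ¬ Y ⊂ X}

/-- `M(f)`: the union of the minimal trapspaces of `f`. -/
def Mset {n : ℕ} (f : (Fin n → Bool) → Fin n → Bool) : Set (Fin n → Bool) :=
  ⋃₀ MT f

-- The min-trapping extension `f^M`: `[x, f^M(x)] = T_f(x)` if `x ∈ M(f)`,
-- and `f^M(x) = ¬x` otherwise.
open scoped Classical in
noncomputable def minExt {n : ℕ} (f : (Fin n → Bool) → Fin n → Bool) :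
    (Fin n → Bool) → Fin n → Bool :=
  fun x => if x ∈ Mset f then opp (Tprin f x) x else fun i => !(x i)

/-! A commutative network `f` is one where updating a coordinate `i` never changes `f` at the
other coordinates. Updating a set `S` then leaves `f` unchanged outside `S`, and since
`f^{(Sᶜ)}(f^{(S)}(x)) = f(x)`, idempotence forces `f (f^{(S)}(x)) = f(x)` on `S` as well.
So a Lille network satisfies `f ∘ f^{(S)} = f` for every `S`, which is a reformulation both of
`f^{(S,T)} = f^{(S ∪ T)}` and, as `[x, f(x)] = {f^{(S)}(x) : S}`, of condition (2). -/

section BooleanNetwork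

variable {n : ℕ} {f : (Fin n → Bool) → Fin n → Bool}

lemma upd_univ (f : (Fin n → Bool) → Fin n → Bool) : upd f Finset.univ = f := by
  funext x i
  simp [upd]

lemma upd_empty (f : (Fin n → Bool) → Fin n → Bool) : upd f ∅ = id := by
  funext x i
  simp [upd]

lemma interval_eq_interval_iff {x y z : Fin n → Bool} :
    interval x y = interval x z ↔ y = z := by
  refine ⟨fun h => funext fun i => ?_, fun h => h ▸ rfl⟩
  have hy : y ∈ interval x z := h ▸ fun _ hi => hi
  have hz : z ∈ interval x y := h ▸ fun _ hi => hi
  have key : ∀ a b c : Bool, (a ≠ b ↔ a ≠ c) → b = c := by decide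
  exact key (x i) (y i) (z i) ⟨@hy i, @hz i⟩

lemma mem_interval_iff_exists_upd {x y : Fin n → Bool} :
    y ∈ interval x (f x) ↔ ∃ S : Finset (Fin n), upd f S x = y := by
  constructor
  · intro hy
    refine ⟨Finset.univ.filter fun i => x i ≠ y i, funext fun i => ?_⟩
    by_cases hi : x i = y i
    · simp [upd, hi]
    · have key : ∀ a b c : Bool, a ≠ b → a ≠ c → b = c := by decide
      simpa [upd, hi] using key _ _ _ (hy hi) hi
  · rintro ⟨S, rfl⟩ i hi
    by_cases hiS : i ∈ S <;> simp_all [delta, upd]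

lemma IsCommutative'.apply_upd_singleton (hc : IsCommutative' f) (x : Fin n → Bool)
    {i j : Fin n} (hji : j ≠ i) : f (upd f {i} x) j = f x j := by
  simpa [upd2, upd, hji] using congrFun (congrFun (hc i j) x) j

lemma IsCommutative'.apply_upd_of_notMem (hc : IsCommutative' f) (x : Fin n → Bool)
    {S : Finset (Fin n)} {j : Fin n} (hj : j ∉ S) : f (upd f S x) j = f x j := by
  induction S using Finset.induction_on generalizing j with
  | empty => rw [upd_empty, id]
  | insert i S hiS ih =>
    have hins : upd f (insert i S) x = upd f {i} (upd f S x) := by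
      funext k
      by_cases hki : k = i
      · subst hki
        simp [upd, ih hiS]
      · simp [upd, hki]
    rw [Finset.mem_insert, not_or] at hj
    rw [hins, hc.apply_upd_singleton _ hj.1, ih hj.2]

lemma IsCommutative'.comp_upd_eq_self (hc : IsCommutative' f) (hidem : f ∘ f = f)
    (S : Finset (Fin n)) : f ∘ upd f S = f := by
  funext x j
  set y := upd f S x
  have hcompl : upd f Sᶜ y = f x := by
    funext k
    by_cases hk : k ∈ S
    · simp [upd, y, hk]
    · simp only [upd, hk, if_true, Finset.mem_compl, not_false_eq_true]
      exact hc.apply_upd_of_notMem x hk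
  by_cases hj : j ∈ S
  · calc f y j = f (upd f Sᶜ y) j :=
          (hc.apply_upd_of_notMem y (Finset.notMem_compl.2 hj)).symm
      _ = f x j := by rw [hcompl, ← Function.comp_apply (f := f), hidem]
  · exact hc.apply_upd_of_notMem x hj

lemma upd2_eq_upd_union_iff :
    (∀ S T : Finset (Fin n), upd2 f S T = upd f (S ∪ T)) ↔
      ∀ S : Finset (Fin n), f ∘ upd f S = f := by
  constructor
  · intro h S
    calc f ∘ upd f S = upd2 f S Finset.univ := by rw [upd2, upd_univ]
      _ = f := by rw [h, Finset.union_eq_right.2 (Finset.subset_univ S), upd_univ]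
  · intro h S T
    funext x i
    have hx : f (upd f S x) i = f x i := congrFun (congrFun (h S) x) i
    by_cases hT : i ∈ T <;> by_cases hS : i ∈ S <;> simp [upd2, upd, hT, hS, hx]

end BooleanNetwork

/-- alternate definitions of Lille networks. -/
theorem stmt18 (n : ℕ) (f : (Fin n → Bool) → Fin n → Bool) :
    List.TFAE [
      IsCommutative' f ∧ f ∘ f = f,
      ∀ x : Fin n → Bool, ∀ y ∈ interval x (f x), interval y (f y) = interval y (f x),
      ∀ S T : Finset (Fin n), upd2 f S T = upd f (S ∪ T)
    ] := by
  tfae_have 1 → 3 := fun ⟨hc, hidem⟩ =>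
    upd2_eq_upd_union_iff.2 (hc.comp_upd_eq_self hidem)
  tfae_have 3 → 1 := by
    intro h
    refine ⟨fun i j => by rw [h, h, Finset.union_comm], ?_⟩
    calc f ∘ f = upd2 f Finset.univ Finset.univ := by rw [upd2, upd_univ]
      _ = f := by rw [h, Finset.union_self, upd_univ]
  tfae_have 2 ↔ 3 := by
    rw [upd2_eq_upd_union_iff]
    constructor
    · intro h S
      funext x
      exact interval_eq_interval_iff.1 (h x _ (mem_interval_iff_exists_upd.2 ⟨S, rfl⟩))
    · intro h x y hy
      obtain ⟨S, rfl⟩ := mem_interval_iff_exists_upd.1 hy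
      rw [show f (upd f S x) = f x from congrFun (h S) x]
  tfae_finish
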